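/- For 1 ≤ k ≤ m and 1 ≤ p < ∞, the (p,k)-th joint numerical index of ℓ∞^m equals 1/k^{1/p}. Moreover, n_{(p,k)}(ℓ∞) = 1/k^{1/p} for all k ∈ ℕ. -/

import Mathlib

/-!
If the norm of `X` is the supremum of coordinates `|x_i|`, then `X` has numerical index one in a
pointwise sense: given `|(T x)_i| > r` with `‖x‖ ≤ 1`, the `i`-th coordinate of
`T (x + (s - x_i) e_i)` is an affine function of `s`, so by the maximum modulus principle on the
unit disc some unimodular `s = t` does at least as well, and `(x + (t - x_i) e_i, t⁻¹ e_i^*)` is in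
`Π_X`. Hence `‖T_j x‖ ≤ w_p(𝒯)` for all `j` and `‖𝒯‖_p ≤ k^{1/p} w_p(𝒯)`. Equality is attained by
the coordinate projections `P_1, …, P_k`: `‖(P_j)‖_p = k^{1/p}` (test on `e_1 + ⋯ + e_k`) while
`w_p(P_j) ≤ 1`, as `∑ |x*(P_j x)|^p ≤ ∑ |x*(e_j)| ≤ ‖x*‖` for `p ≥ 1`.
-/

open scoped ENNReal

noncomputable section

/-- The set Π_X of pairs (x, x*) with ‖x‖ = 1, ‖x*‖ = 1 and x*(x) = 1. -/
def dualPairs (𝕜 X : Type*) [RCLike 𝕜] [NormedAddCommGroup X] [NormedSpace 𝕜 X] :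
    Set (X × (X →L[𝕜] 𝕜)) :=
  {q | ‖q.1‖ = 1 ∧ ‖q.2‖ = 1 ∧ q.2 q.1 = 1}

/-- Numerical range of an operator. -/
def numRange {𝕜 X : Type*} [RCLike 𝕜] [NormedAddCommGroup X] [NormedSpace 𝕜 X]
    (T : X →L[𝕜] X) : Set 𝕜 :=
  {c | ∃ q ∈ dualPairs 𝕜 X, c = q.2 (T q.1)}

/-- Numerical radius of an operator. -/
def numRadius {𝕜 X : Type*} [RCLike 𝕜] [NormedAddCommGroup X] [NormedSpace 𝕜 X]
    (T : X →L[𝕜] X) : ℝ :=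
  sSup {r | ∃ q ∈ dualPairs 𝕜 X, r = ‖q.2 (T q.1)‖}

/-- Joint numerical range of a k-tuple of operators. -/
def jointNumRange {𝕜 X : Type*} [RCLike 𝕜] [NormedAddCommGroup X] [NormedSpace 𝕜 X]
    {k : ℕ} (T : Fin k → X →L[𝕜] X) : Set (Fin k → 𝕜) :=
  {v | ∃ q ∈ dualPairs 𝕜 X, v = fun i => q.2 (T i q.1)}

/-- The p-th joint numerical radius of a k-tuple of operators. -/
def jointNumRadius {𝕜 X : Type*} [RCLike 𝕜] [NormedAddCommGroup X] [NormedSpace 𝕜 X]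
    (p : ℝ) {k : ℕ} (T : Fin k → X →L[𝕜] X) : ℝ :=
  sSup {r | ∃ q ∈ dualPairs 𝕜 X, r = (∑ i, ‖q.2 (T i q.1)‖ ^ p) ^ (1 / p)}

/-- The p-th joint operator norm of a k-tuple of operators. -/
def jointOpNorm {𝕜 X Y : Type*} [RCLike 𝕜] [NormedAddCommGroup X] [NormedSpace 𝕜 X]
    [NormedAddCommGroup Y] [NormedSpace 𝕜 Y]
    (p : ℝ) {k : ℕ} (T : Fin k → X →L[𝕜] Y) : ℝ :=
  sSup {r | ∃ x : X, ‖x‖ = 1 ∧ r = (∑ i, ‖T i x‖ ^ p) ^ (1 / p)}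

/-- The numerical index of a space. -/
def numIndex (𝕜 X : Type*) [RCLike 𝕜] [NormedAddCommGroup X] [NormedSpace 𝕜 X] : ℝ :=
  sInf {r | ∃ T : X →L[𝕜] X, ‖T‖ = 1 ∧ r = numRadius T}

/-- The (p,k)-th joint numerical index of a space. -/
def jointNumIndex (p : ℝ) (k : ℕ) (𝕜 X : Type*) [RCLike 𝕜] [NormedAddCommGroup X]
    [NormedSpace 𝕜 X] : ℝ :=
  sInf {r | ∃ T : Fin k → X →L[𝕜] X, jointOpNorm p T = 1 ∧ r = jointNumRadius p T}

open Finset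

section RpowSum

variable {k : ℕ} {p : ℝ}

lemma le_rpow_sum_rpow (hp : 0 < p) {a : Fin k → ℝ} (ha : ∀ i, 0 ≤ a i) (i : Fin k) :
    a i ≤ (∑ j, a j ^ p) ^ (1 / p) := by
  calc a i = (a i ^ p) ^ (1 / p) := by rw [← Real.rpow_mul (ha i), mul_one_div_cancel hp.ne',
        Real.rpow_one]
    _ ≤ (∑ j, a j ^ p) ^ (1 / p) :=
      Real.rpow_le_rpow (Real.rpow_nonneg (ha i) p)
        (single_le_sum (fun j _ => Real.rpow_nonneg (ha j) p) (mem_univ i)) (by positivity)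

lemma rpow_sum_rpow_mono (hp : 0 < p) {a b : Fin k → ℝ} (ha : ∀ i, 0 ≤ a i)
    (hab : ∀ i, a i ≤ b i) : (∑ i, a i ^ p) ^ (1 / p) ≤ (∑ i, b i ^ p) ^ (1 / p) :=
  Real.rpow_le_rpow (sum_nonneg fun i _ => Real.rpow_nonneg (ha i) p)
    (sum_le_sum fun i _ => Real.rpow_le_rpow (ha i) (hab i) hp.le) (by positivity)

lemma rpow_sum_rpow_mul (hp : p ≠ 0) {c : ℝ} (hc : 0 ≤ c) {a : Fin k → ℝ} (ha : ∀ i, 0 ≤ a i) :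
    (∑ i, (c * a i) ^ p) ^ (1 / p) = c * (∑ i, a i ^ p) ^ (1 / p) := by
  simp_rw [Real.mul_rpow hc (ha _)]
  rw [← mul_sum,
    Real.mul_rpow (Real.rpow_nonneg hc p) (sum_nonneg fun i _ => Real.rpow_nonneg (ha i) p),
    ← Real.rpow_mul hc, mul_one_div_cancel hp, Real.rpow_one]

lemma rpow_sum_rpow_const (hp : p ≠ 0) {c : ℝ} (hc : 0 ≤ c) :
    (∑ _i : Fin k, c ^ p) ^ (1 / p) = (k : ℝ) ^ (1 / p) * c := by
  rw [sum_const, card_univ, Fintype.card_fin, nsmul_eq_mul,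
    Real.mul_rpow k.cast_nonneg (Real.rpow_nonneg hc p), ← Real.rpow_mul hc,
    mul_one_div_cancel hp, Real.rpow_one]

end RpowSum

lemma Real.sSup_setOf_exists_mul {α : Type*} {P : α → Prop} {f : α → ℝ} {c : ℝ} (hc : 0 ≤ c) :
    sSup {r | ∃ a, P a ∧ r = c * f a} = c * sSup {r | ∃ a, P a ∧ r = f a} := by
  rw [← smul_eq_mul, ← Real.sSup_smul_of_nonneg hc]
  congr 1
  ext r
  constructor
  · rintro ⟨a, ha, rfl⟩
    exact ⟨f a, ⟨a, ha, rfl⟩, rfl⟩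
  · rintro ⟨_, ⟨a, ha, rfl⟩, rfl⟩
    exact ⟨a, ha, rfl⟩

section JointNorms

variable {𝕜 X Y : Type*} [RCLike 𝕜] [NormedAddCommGroup X] [NormedSpace 𝕜 X]
  [NormedAddCommGroup Y] [NormedSpace 𝕜 Y] {p : ℝ} {k : ℕ}

lemma mem_dualPairs_of_norm_le {x : X} {φ : X →L[𝕜] 𝕜} (hx : ‖x‖ ≤ 1) (hφ : ‖φ‖ ≤ 1)
    (hφx : φ x = 1) : (x, φ) ∈ dualPairs 𝕜 X := by
  have h := φ.le_opNorm x
  rw [hφx, norm_one] at h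
  refine ⟨?_, ?_, hφx⟩ <;> nlinarith [norm_nonneg x, norm_nonneg φ]

lemma jointOpNorm_smul (hp : p ≠ 0) {c : ℝ} (hc : 0 ≤ c) (T : Fin k → X →L[𝕜] Y) :
    jointOpNorm p (fun i => (c : 𝕜) • T i) = c * jointOpNorm p T := by
  unfold jointOpNorm
  rw [← Real.sSup_setOf_exists_mul hc]
  simp_rw [← rpow_sum_rpow_mul hp hc (fun _ => norm_nonneg _), smul_apply,
    norm_smul, RCLike.norm_ofReal, abs_of_nonneg hc]

lemma jointNumRadius_smul (hp : p ≠ 0) {c : ℝ} (hc : 0 ≤ c) (T : Fin k → X →L[𝕜] X) :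
    jointNumRadius p (fun i => (c : 𝕜) • T i) = c * jointNumRadius p T := by
  unfold jointNumRadius
  rw [← Real.sSup_setOf_exists_mul hc]
  simp_rw [← rpow_sum_rpow_mul hp hc (fun _ => norm_nonneg _), smul_apply,
    map_smul, smul_eq_mul, norm_mul, RCLike.norm_ofReal, abs_of_nonneg hc]

lemma jointNumRadius_nonneg (T : Fin k → X →L[𝕜] X) : 0 ≤ jointNumRadius p T :=
  Real.sSup_nonneg <| by rintro r ⟨q, -, rfl⟩; positivity

lemma le_jointNumRadius (hp : 0 < p) (T : Fin k → X →L[𝕜] X) {q : X × (X →L[𝕜] 𝕜)}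
    (hq : q ∈ dualPairs 𝕜 X) :
    (∑ i, ‖q.2 (T i q.1)‖ ^ p) ^ (1 / p) ≤ jointNumRadius p T := by
  refine le_csSup ⟨(∑ i, ‖T i‖ ^ p) ^ (1 / p), ?_⟩ ⟨q, hq, rfl⟩
  rintro r ⟨⟨x, φ⟩, ⟨hx, hφ, -⟩, rfl⟩
  refine rpow_sum_rpow_mono hp (fun _ => norm_nonneg _) fun i => ?_
  calc ‖φ (T i x)‖ ≤ ‖φ‖ * ‖T i x‖ := φ.le_opNorm _
    _ ≤ 1 * (‖T i‖ * ‖x‖) := by rw [hφ]; gcongr; exact (T i).le_opNorm x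
    _ = ‖T i‖ := by rw [hx, one_mul, mul_one]

lemma le_jointOpNorm (hp : 0 < p) (T : Fin k → X →L[𝕜] Y) {x : X} (hx : ‖x‖ = 1) :
    (∑ i, ‖T i x‖ ^ p) ^ (1 / p) ≤ jointOpNorm p T := by
  refine le_csSup ⟨(∑ i, ‖T i‖ ^ p) ^ (1 / p), ?_⟩ ⟨x, hx, rfl⟩
  rintro r ⟨y, hy, rfl⟩
  refine rpow_sum_rpow_mono hp (fun _ => norm_nonneg _) fun i => ?_
  simpa [hy] using (T i).le_opNorm y

lemma jointOpNorm_le (hp : 0 < p) (T : Fin k → X →L[𝕜] Y) {M : ℝ} (hM : 0 ≤ M)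
    (h : ∀ i x, ‖x‖ = 1 → ‖T i x‖ ≤ M) : jointOpNorm p T ≤ (k : ℝ) ^ (1 / p) * M := by
  refine Real.sSup_le ?_ (by positivity)
  rintro r ⟨x, hx, rfl⟩
  rw [← rpow_sum_rpow_const hp.ne' hM]
  exact rpow_sum_rpow_mono hp (fun _ => norm_nonneg _) fun i => h i x hx

lemma exists_jointOpNorm_eq_one (hp : p ≠ 0) (T : Fin k → X →L[𝕜] X)
    (hT : 0 < jointOpNorm p T) : ∃ S : Fin k → X →L[𝕜] X,
      jointOpNorm p S = 1 ∧ jointNumRadius p S = jointNumRadius p T / jointOpNorm p T := by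
  have hc : 0 ≤ (jointOpNorm p T)⁻¹ := inv_nonneg.2 hT.le
  refine ⟨fun i => (((jointOpNorm p T)⁻¹ : ℝ) : 𝕜) • T i, ?_, ?_⟩
  · rw [jointOpNorm_smul hp hc, inv_mul_cancel₀ hT.ne']
  · rw [jointNumRadius_smul hp hc, div_eq_inv_mul]

lemma jointNumIndex_le {S : Fin k → X →L[𝕜] X} (hS : jointOpNorm p S = 1) :
    jointNumIndex p k 𝕜 X ≤ jointNumRadius p S :=
  csInf_le ⟨0, by rintro r ⟨T, -, rfl⟩; exact jointNumRadius_nonneg T⟩ ⟨S, hS, rfl⟩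

lemma le_jointNumIndex {c : ℝ} (hne : ∃ S : Fin k → X →L[𝕜] X, jointOpNorm p S = 1)
    (h : ∀ S : Fin k → X →L[𝕜] X, jointOpNorm p S = 1 → c ≤ jointNumRadius p S) :
    c ≤ jointNumIndex p k 𝕜 X := by
  obtain ⟨S, hS⟩ := hne
  exact le_csInf ⟨_, S, hS, rfl⟩ (by rintro r ⟨T, hT, rfl⟩; exact h T hT)

end JointNorms

section Unimodular

variable {𝕜 : Type*} [RCLike 𝕜]

lemma RCLike.exists_norm_eq_one_eq_norm_mul (z : 𝕜) : ∃ u : 𝕜, ‖u‖ = 1 ∧ z = ‖z‖ * u := by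
  rcases eq_or_ne z 0 with rfl | hz
  · exact ⟨1, norm_one, by simp⟩
  · have hz' : (‖z‖ : 𝕜) ≠ 0 := RCLike.ofReal_ne_zero.2 (norm_ne_zero_iff.2 hz)
    refine ⟨z / ‖z‖, ?_, (mul_div_cancel₀ z hz').symm⟩
    rw [norm_div, RCLike.norm_ofReal, abs_norm, div_self (norm_ne_zero_iff.2 hz)]

lemma RCLike.exists_norm_eq_one_norm_add_mul_le (a b : 𝕜) {s : 𝕜} (hs : ‖s‖ ≤ 1) :
    ∃ t : 𝕜, ‖t‖ = 1 ∧ ‖a + s * b‖ ≤ ‖a + t * b‖ := by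
  obtain ⟨α, hα, ha⟩ := exists_norm_eq_one_eq_norm_mul a
  obtain ⟨β, hβ, hb⟩ := exists_norm_eq_one_eq_norm_mul b
  have hβ0 : β ≠ 0 := norm_ne_zero_iff.1 (by rw [hβ]; exact one_ne_zero)
  refine ⟨α / β, by rw [norm_div, hα, hβ, div_one], ?_⟩
  have key : a + α / β * b = α * ((‖a‖ + ‖b‖ : ℝ) : 𝕜) := by
    conv_lhs => rw [ha, hb]
    push_cast
    field_simp
  calc ‖a + s * b‖ ≤ ‖a‖ + ‖s‖ * ‖b‖ := by rw [← norm_mul]; exact norm_add_le _ _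
    _ ≤ ‖a‖ + ‖b‖ := by nlinarith [norm_nonneg b]
    _ = ‖a + α / β * b‖ := by
      rw [key, norm_mul, hα, one_mul, RCLike.norm_ofReal, abs_of_nonneg (by positivity)]

end Unimodular

/-- What the argument uses of `ℓ∞^m` and `ℓ∞`: the `e i` need not span `X`. -/
structure SupCoordinates (𝕜 X I : Type*) [RCLike 𝕜] [NormedAddCommGroup X] [NormedSpace 𝕜 X]
    where
  e : I → X
  coord : I → X →L[𝕜] 𝕜
  coord_e_self : ∀ i, coord i (e i) = 1
  coord_e_of_ne : ∀ {i j}, i ≠ j → coord i (e j) = 0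
  norm_eq_iSup : ∀ y, ‖y‖ = ⨆ i, ‖coord i y‖
  bddAbove_range : ∀ y, BddAbove (Set.range fun i => ‖coord i y‖)

namespace SupCoordinates

variable {𝕜 X I : Type*} [RCLike 𝕜] [NormedAddCommGroup X] [NormedSpace 𝕜 X]
  (B : SupCoordinates 𝕜 X I)

lemma norm_coord_apply_le (i : I) (y : X) : ‖B.coord i y‖ ≤ ‖y‖ :=
  B.norm_eq_iSup y ▸ le_ciSup (B.bddAbove_range y) i

lemma norm_le_of_forall {y : X} {r : ℝ} (hr : 0 ≤ r) (h : ∀ i, ‖B.coord i y‖ ≤ r) : ‖y‖ ≤ r :=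
  B.norm_eq_iSup y ▸ Real.iSup_le h hr

lemma exists_lt_norm_coord [Nonempty I] {y : X} {r : ℝ} (hr : r < ‖y‖) :
    ∃ i, r < ‖B.coord i y‖ :=
  exists_lt_of_lt_ciSup (B.norm_eq_iSup y ▸ hr)

lemma norm_coord_le_one (i : I) : ‖B.coord i‖ ≤ 1 :=
  (B.coord i).opNorm_le_bound zero_le_one fun y =>
    (one_mul ‖y‖).symm ▸ B.norm_coord_apply_le i y

lemma coord_e [DecidableEq I] (i j : I) : B.coord i (B.e j) = if i = j then 1 else 0 := by
  split_ifs with h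
  · exact h ▸ B.coord_e_self i
  · exact B.coord_e_of_ne h

lemma coord_sum_smul_e [DecidableEq I] (s : Finset I) (u : I → 𝕜) (j : I) :
    B.coord j (∑ i ∈ s, u i • B.e i) = if j ∈ s then u j else 0 := by
  simp [B.coord_e, sum_ite_eq]

lemma norm_sum_smul_e_le_one (s : Finset I) {u : I → 𝕜} (hu : ∀ i ∈ s, ‖u i‖ ≤ 1) :
    ‖∑ i ∈ s, u i • B.e i‖ ≤ 1 := by
  classical
  refine B.norm_le_of_forall zero_le_one fun j => ?_
  rw [B.coord_sum_smul_e]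
  split_ifs with hj
  · exact hu j hj
  · simp

lemma norm_sum_e (s : Finset I) (hs : s.Nonempty) : ‖∑ i ∈ s, B.e i‖ = 1 := by
  classical
  obtain ⟨j, hj⟩ := hs
  have hsum : ∑ i ∈ s, B.e i = ∑ i ∈ s, (1 : 𝕜) • B.e i := by simp
  refine le_antisymm (hsum ▸ B.norm_sum_smul_e_le_one s fun _ _ => norm_one.le) ?_
  simpa [hsum, B.coord_sum_smul_e, hj] using B.norm_coord_apply_le j (∑ i ∈ s, (1 : 𝕜) • B.e i)

lemma norm_e (i : I) : ‖B.e i‖ = 1 := by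
  simpa using B.norm_sum_e {i} (singleton_nonempty i)

lemma sum_norm_apply_e_le (φ : X →L[𝕜] 𝕜) (s : Finset I) : ∑ i ∈ s, ‖φ (B.e i)‖ ≤ ‖φ‖ := by
  choose u hu hφu using fun i => RCLike.exists_norm_eq_one_eq_norm_mul (φ (B.e i))
  have hφz : φ (∑ i ∈ s, (u i)⁻¹ • B.e i) = ((∑ i ∈ s, ‖φ (B.e i)‖ : ℝ) : 𝕜) := by
    rw [map_sum]
    push_cast
    refine sum_congr rfl fun i _ => ?_
    have hu0 : u i ≠ 0 := norm_ne_zero_iff.1 (by rw [hu i]; exact one_ne_zero)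
    rw [map_smul, smul_eq_mul]
    conv_lhs => rw [hφu i]
    rw [mul_left_comm, inv_mul_cancel₀ hu0, mul_one]
  have hz := B.norm_sum_smul_e_le_one s (u := fun i => (u i)⁻¹) fun i _ => by
    rw [norm_inv, hu i, inv_one]
  calc ∑ i ∈ s, ‖φ (B.e i)‖ = ‖φ (∑ i ∈ s, (u i)⁻¹ • B.e i)‖ := by
        rw [hφz, RCLike.norm_ofReal, abs_of_nonneg (sum_nonneg fun _ _ => norm_nonneg _)]
    _ ≤ ‖φ‖ * 1 := φ.le_opNorm_of_le hz
    _ = ‖φ‖ := mul_one _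

/-- A pointwise form of `n(X) = 1`. -/
lemma exists_mem_dualPairs_lt_norm_apply [Nonempty I] (B : SupCoordinates 𝕜 X I)
    (T : X →L[𝕜] X) {x : X} (hx : ‖x‖ ≤ 1) {r : ℝ} (hr : r < ‖T x‖) :
    ∃ q ∈ dualPairs 𝕜 X, r < ‖q.2 (T q.1)‖ := by
  obtain ⟨i, hi⟩ := B.exists_lt_norm_coord hr
  set ξ := B.coord i x
  set b := B.coord i (T (B.e i))
  set a := B.coord i (T x) - ξ * b
  obtain ⟨t, ht, hle⟩ :=
    RCLike.exists_norm_eq_one_norm_add_mul_le a b ((B.norm_coord_apply_le i x).trans hx)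
  have ht0 : t ≠ 0 := norm_ne_zero_iff.1 (by rw [ht]; exact one_ne_zero)
  set y := x + (t - ξ) • B.e i
  have hcoord : ∀ j, B.coord j y = B.coord j x + (t - ξ) * B.coord j (B.e i) := fun j => by
    simp [y]
  have hyi : B.coord i y = t := by rw [hcoord, B.coord_e_self]; ring
  have hy : ‖y‖ ≤ 1 := B.norm_le_of_forall zero_le_one fun j => by
    rcases eq_or_ne j i with rfl | hji
    · rw [hyi, ht]
    · rw [hcoord, B.coord_e_of_ne hji, mul_zero, add_zero]
      exact (B.norm_coord_apply_le j x).trans hx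
  have hTy : B.coord i (T y) = a + t * b := by
    simp only [map_add, map_smul, smul_eq_mul, y, a, b]
    ring
  refine ⟨(y, t⁻¹ • B.coord i), mem_dualPairs_of_norm_le hy ?_ ?_, ?_⟩
  · rw [norm_smul, norm_inv, ht, inv_one, one_mul]
    exact B.norm_coord_le_one i
  · rw [smul_apply, hyi, smul_eq_mul, inv_mul_cancel₀ ht0]
  · calc r < ‖a + ξ * b‖ := by rwa [sub_add_cancel]
      _ ≤ ‖a + t * b‖ := hle
      _ = ‖(t⁻¹ • B.coord i) (T y)‖ := by
        rw [smul_apply, smul_eq_mul, norm_mul, norm_inv, ht, inv_one, one_mul, hTy]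

lemma norm_apply_le_jointNumRadius [Nonempty I] (B : SupCoordinates 𝕜 X I) {p : ℝ}
    (hp : 0 < p) {k : ℕ} (T : Fin k → X →L[𝕜] X) (i : Fin k) {x : X} (hx : ‖x‖ ≤ 1) :
    ‖T i x‖ ≤ jointNumRadius p T := by
  refine le_of_forall_lt fun r hr => ?_
  obtain ⟨q, hq, hrq⟩ := B.exists_mem_dualPairs_lt_norm_apply (T i) hx hr
  calc r < ‖q.2 (T i q.1)‖ := hrq
    _ ≤ (∑ j, ‖q.2 (T j q.1)‖ ^ p) ^ (1 / p) :=
      le_rpow_sum_rpow hp (a := fun j => ‖q.2 (T j q.1)‖) (fun _ => norm_nonneg _) i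
    _ ≤ jointNumRadius p T := le_jointNumRadius hp T hq

lemma one_div_rpow_le_jointNumRadius [Nonempty I] (B : SupCoordinates 𝕜 X I) {p : ℝ}
    (hp : 0 < p) {k : ℕ} (T : Fin k → X →L[𝕜] X) (hT : jointOpNorm p T = 1) :
    1 / (k : ℝ) ^ (1 / p) ≤ jointNumRadius p T := by
  have h : 1 ≤ (k : ℝ) ^ (1 / p) * jointNumRadius p T := hT ▸ jointOpNorm_le hp T
    (jointNumRadius_nonneg T) fun i x hx => B.norm_apply_le_jointNumRadius hp T i hx.le
  exact div_le_of_le_mul₀ (by positivity) (jointNumRadius_nonneg T) (by rwa [mul_comm])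

def proj (i : I) : X →L[𝕜] X := (B.coord i).smulRight (B.e i)

lemma proj_apply (i : I) (x : X) : B.proj i x = B.coord i x • B.e i := rfl

lemma norm_proj_apply (i : I) (x : X) : ‖B.proj i x‖ = ‖B.coord i x‖ := by
  rw [proj_apply, norm_smul, B.norm_e, mul_one]

lemma jointOpNorm_proj {p : ℝ} (hp : 0 < p) {k : ℕ} (hk : 0 < k) (ι : Fin k ↪ I) :
    jointOpNorm p (fun j => B.proj (ι j)) = (k : ℝ) ^ (1 / p) := by
  classical
  set x₀ := ∑ i ∈ univ.map ι, B.e i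
  have hx₀ : ‖x₀‖ = 1 := B.norm_sum_e _ (univ_nonempty_iff.2 ⟨⟨0, hk⟩⟩ |>.map)
  have hcoord : ∀ j, ‖B.coord (ι j) x₀‖ = 1 := fun j => by
    have h := B.coord_sum_smul_e (univ.map ι) (fun _ => 1) (ι j)
    simp only [one_smul, mem_map_of_mem, mem_univ, if_true] at h
    rw [h, norm_one]
  refine le_antisymm ?_ ?_
  · refine (jointOpNorm_le hp _ zero_le_one fun j x hx => ?_).trans (mul_one _).le
    exact (B.norm_proj_apply _ x).trans_le (hx ▸ B.norm_coord_apply_le _ x)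
  · have h := le_jointOpNorm hp (fun j => B.proj (ι j)) hx₀
    simp only [norm_proj_apply, hcoord] at h
    rwa [rpow_sum_rpow_const hp.ne' zero_le_one, mul_one] at h

lemma jointNumRadius_proj_le {p : ℝ} (hp : 1 ≤ p) {k : ℕ} (ι : Fin k ↪ I) :
    jointNumRadius p (fun j => B.proj (ι j)) ≤ 1 := by
  refine Real.sSup_le ?_ zero_le_one
  rintro r ⟨⟨x, φ⟩, ⟨hx, hφ, -⟩, rfl⟩
  have hterm : ∀ j, ‖φ (B.proj (ι j) x)‖ ≤ ‖φ (B.e (ι j))‖ := fun j => by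
    rw [proj_apply, map_smul, norm_smul]
    exact mul_le_of_le_one_left (norm_nonneg _) (hx ▸ B.norm_coord_apply_le _ x)
  have hφe : ∀ j, ‖φ (B.e (ι j))‖ ≤ 1 := fun j =>
    (φ.le_opNorm _).trans (by rw [hφ, B.norm_e, one_mul])
  have hℓ₁ : ∑ j, ‖φ (B.e (ι j))‖ ≤ 1 := by
    simpa [hφ] using B.sum_norm_apply_e_le φ (univ.map ι)
  refine Real.rpow_le_one (sum_nonneg fun _ _ => by positivity) ?_ (by positivity)
  calc ∑ j, ‖φ (B.proj (ι j) x)‖ ^ p ≤ ∑ j, ‖φ (B.e (ι j))‖ := sum_le_sum fun j _ =>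
        (Real.rpow_le_self_of_le_one (norm_nonneg _) ((hterm j).trans (hφe j)) hp).trans
          (hterm j)
    _ ≤ 1 := hℓ₁

theorem jointNumIndex_eq (B : SupCoordinates 𝕜 X I) {p : ℝ} (hp : 1 ≤ p) {k : ℕ} (hk : 0 < k)
    (ι : Fin k ↪ I) : jointNumIndex p k 𝕜 X = 1 / (k : ℝ) ^ (1 / p) := by
  have hp₀ : 0 < p := zero_lt_one.trans_le hp
  have : Nonempty I := ⟨ι ⟨0, hk⟩⟩
  have hnorm := B.jointOpNorm_proj hp₀ hk ι
  obtain ⟨S, hS, hSrad⟩ := exists_jointOpNorm_eq_one hp₀.ne' (fun j => B.proj (ι j))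
    (hnorm ▸ by positivity)
  refine le_antisymm ((jointNumIndex_le hS).trans ?_)
    (le_jointNumIndex ⟨S, hS⟩ fun T hT => B.one_div_rpow_le_jointNumRadius hp₀ T hT)
  rw [hSrad, hnorm]
  gcongr
  exact B.jointNumRadius_proj_le hp ι

end SupCoordinates

section Instances

variable {𝕜 : Type*} [RCLike 𝕜]

def piLpSupCoordinates (m : ℕ) : SupCoordinates 𝕜 (PiLp ∞ (fun _ : Fin m => 𝕜)) (Fin m) where
  e i := WithLp.toLp ∞ (Pi.single i 1)
  coord i := PiLp.proj ∞ (fun _ => 𝕜) i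
  coord_e_self i := by simp
  coord_e_of_ne h := by simp [h]
  norm_eq_iSup := PiLp.norm_eq_ciSup
  bddAbove_range _ := Finite.bddAbove_range _

def lpSupCoordinates : SupCoordinates 𝕜 (lp (fun _ : ℕ => 𝕜) ∞) ℕ where
  e i := lp.single ∞ i 1
  coord i := lp.evalCLM 𝕜 (fun _ => 𝕜) ∞ i
  coord_e_self i := by simp [lp.evalCLM]
  coord_e_of_ne h := by simp [lp.evalCLM, h]
  norm_eq_iSup := lp.norm_eq_ciSup
  bddAbove_range y := (lp.memℓp y).bddAbove

end Instances

theorem stmt16 {𝕜 : Type*} [RCLike 𝕜] {p : ℝ} (hp : 1 ≤ p) {k : ℕ} (hk : 1 ≤ k) :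
    (∀ m : ℕ, k ≤ m →
      jointNumIndex p k 𝕜 (PiLp ∞ (fun _ : Fin m => 𝕜)) = 1 / (k : ℝ) ^ (1 / p)) ∧
    jointNumIndex p k 𝕜 (lp (fun _ : ℕ => 𝕜) ∞) = 1 / (k : ℝ) ^ (1 / p) :=
  ⟨fun m hm => (piLpSupCoordinates m).jointNumIndex_eq hp hk (Fin.castLEEmb hm),
    lpSupCoordinates.jointNumIndex_eq hp hk Fin.valEmbedding⟩
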